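/- arXiv:1108.3548 — 8 statements merged into one kernel-verified Lean document; each statement's English description precedes it below -/
import Mathlib

section
/- Let α, β, γ be complex numbers and m a positive integer. Then at least one of the numbers α, β, γ, α+γ, β+γ, α+β+γ is not an m-th root of unity. -/
lemma normSq_one_of_pow (z : ℂ) (m : ℕ) (hm : 0 < m) (h : z ^ m = 1) :
    Complex.normSq z = 1 := by
  have h1 : Complex.normSq z ^ m = 1 := by
    rw [← map_pow, h, map_one]
  have h2 : (0:ℝ) ≤ Complex.normSq z := Complex.normSq_nonneg z
  rcases (pow_eq_one_iff_cases.mp h1) with h | h | h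
  · omega
  · exact h
  · nlinarith [h.1]

theorem roots1 (α β γ : ℂ) (m : ℕ) (hm : 0 < m) :
    ¬ (α ^ m = 1 ∧ β ^ m = 1 ∧ γ ^ m = 1 ∧ (α + γ) ^ m = 1 ∧ (β + γ) ^ m = 1 ∧
       (α + β + γ) ^ m = 1) := by
  rintro ⟨h1, h2, h3, h4, h5, h6⟩
  have n1 := normSq_one_of_pow _ _ hm h1
  have n2 := normSq_one_of_pow _ _ hm h2
  have n3 := normSq_one_of_pow _ _ hm h3
  have n4 := normSq_one_of_pow _ _ hm h4
  have n5 := normSq_one_of_pow _ _ hm h5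
  have n6 := normSq_one_of_pow _ _ hm h6
  simp only [Complex.normSq_apply, Complex.add_re, Complex.add_im] at n1 n2 n3 n4 n5 n6
  set a1 := α.re; set a2 := α.im
  set b1 := β.re; set b2 := β.im
  set c1 := γ.re; set c2 := γ.im
  have e1 : a1*c1 + a2*c2 = -1/2 := by nlinarith
  have e2 : b1*c1 + b2*c2 = -1/2 := by nlinarith
  have e3 : a1*b1 + a2*b2 = 0 := by nlinarith
  have p1 : (a2*c1 - a1*c2)^2 = 3/4 := by
    linear_combination (c1^2+c2^2)*n1 + n3 + (1/2 - (a1*c1+a2*c2))*e1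
  have p2 : (b2*c1 - b1*c2)^2 = 3/4 := by
    linear_combination (c1^2+c2^2)*n2 + n3 + (1/2 - (b1*c1+b2*c2))*e2
  have p3 : (a2*c1 - a1*c2) * (b2*c1 - b1*c2) = -1/4 := by
    linear_combination (c1^2+c2^2)*e3 - (b1*c1+b2*c2)*e1 + (1/2)*e2
  have p4 : ((a2*c1 - a1*c2) * (b2*c1 - b1*c2))^2 = 1/16 := by
    rw [p3]; norm_num
  have p5 : ((a2*c1 - a1*c2) * (b2*c1 - b1*c2))^2 = 9/16 := by
    rw [mul_pow, p1, p2]; norm_num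
  linarith [p4, p5]
end

section
/- Let α₁, α₂, α₃, α₄ be m-th roots of unity (m a positive integer). Then at least one of the six numbers αᵢ + αⱼ for i ≠ j is not an m-th root of unity. -/
/-!
Roots of unity lie on the unit circle, and if `a`, `b` and `a + b` all have norm one then
`a² + ab + b² = 0`. So if every pairwise sum were a root of unity, the three numbers `α₁, α₂, α₃`
would all be roots of the quadratic `X² + α₀ X + α₀²`; two of them would coincide, say `αⱼ = αₖ`,
and then `‖αⱼ + αₖ‖ = 2`.
-/

open ComplexConjugate

theorem Complex.sq_add_mul_add_sq_eq_zero_of_norm_eq_one {a b : ℂ} (ha : ‖a‖ = 1)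
    (hb : ‖b‖ = 1) (hab : ‖a + b‖ = 1) : a ^ 2 + a * b + b ^ 2 = 0 := by
  have hunit : ∀ z : ℂ, ‖z‖ = 1 → z * conj z = 1 := fun z hz => by
    rw [Complex.mul_conj', hz]; norm_num
  have ha' := hunit a ha
  have hb' := hunit b hb
  have hab' := hunit (a + b) hab
  rw [map_add] at hab'
  linear_combination a * b * hab' - (a * b + b ^ 2) * ha' - (a * b + a ^ 2) * hb'

theorem eq_or_eq_or_eq_of_sq_add_mul_add_eq_zero {R : Type*} [CommRing R] [NoZeroDivisors R]
    {p q x y z : R} (hx : x ^ 2 + x * p + q = 0) (hy : y ^ 2 + y * p + q = 0)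
    (hz : z ^ 2 + z * p + q = 0) : x = y ∨ x = z ∨ y = z := by
  have vieta : ∀ u v : R, u ^ 2 + u * p + q = 0 → v ^ 2 + v * p + q = 0 →
      u = v ∨ u + v + p = 0 := fun u v hu hv => by
    rw [← sub_eq_zero (a := u)]
    exact mul_eq_zero.mp (by linear_combination hu - hv)
  rcases vieta x y hx hy with hxy | hxy
  · exact .inl hxy
  rcases vieta x z hx hz with hxz | hxz
  · exact .inr (.inl hxz)
  exact .inr (.inr (by linear_combination hxy - hxz))

theorem roots2 (m : ℕ) (hm : 0 < m) (α : Fin 4 → ℂ) (h : ∀ i, α i ^ m = 1) :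
    ∃ i j : Fin 4, i ≠ j ∧ (α i + α j) ^ m ≠ 1 := by
  by_contra! hsum
  have hα : ∀ i, ‖α i‖ = 1 := fun i => Complex.norm_eq_one_of_pow_eq_one (h i) hm.ne'
  have hαα : ∀ i j, i ≠ j → ‖α i + α j‖ = 1 := fun i j hij =>
    Complex.norm_eq_one_of_pow_eq_one (hsum i j hij) hm.ne'
  have hquad : ∀ i : Fin 4, i ≠ 0 → α i ^ 2 + α i * α 0 + α 0 ^ 2 = 0 := fun i hi =>
    Complex.sq_add_mul_add_sq_eq_zero_of_norm_eq_one (hα i) (hα 0) (hαα i 0 hi)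
  obtain ⟨j, k, hjk, hαjk⟩ : ∃ j k : Fin 4, j ≠ k ∧ α j = α k := by
    rcases eq_or_eq_or_eq_of_sq_add_mul_add_eq_zero (hquad 1 (by decide)) (hquad 2 (by decide))
      (hquad 3 (by decide)) with h12 | h13 | h23
    exacts [⟨1, 2, by decide, h12⟩, ⟨1, 3, by decide, h13⟩, ⟨2, 3, by decide, h23⟩]
  have := hαα j k hjk
  rw [hαjk, ← two_mul, norm_mul, hα k, Complex.norm_two] at this
  norm_num at this
end

section
/- Let g be a nonabelian finite-dimensional complex Lie algebra admitting a derivation D of finite multiplicative order m (i.e., D^m = id and m is the order of D). Then m is a multiple of six. -/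
/-!
Since `D ^ m = 1` with `m ≠ 0`, the derivation `D` is diagonalisable and its eigenvalues are
`m`-th roots of unity. As `g` is not abelian, some eigenvectors `x`, `y` have `⁅x, y⁆ ≠ 0`, and the
Leibniz rule makes `⁅x, y⁆` an eigenvector for the sum of their eigenvalues `a + b`. So `a`, `b` and
`a + b` all lie on the unit circle, which forces `(a + b) / a` to be a primitive sixth root of unity.
-/

open Polynomial

theorem Complex.isPrimitiveRoot_six_of_norm_eq_one {z : ℂ} (hz : ‖z‖ = 1) (hz₁ : ‖z - 1‖ = 1) :
    IsPrimitiveRoot z 6 := by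
  have h₀ : z * (starRingEnd ℂ) z = 1 := by
    rw [Complex.mul_conj, Complex.normSq_eq_norm_sq, hz]; norm_num
  have h₁ : (z - 1) * (starRingEnd ℂ) (z - 1) = 1 := by
    rw [Complex.mul_conj, Complex.normSq_eq_norm_sq, hz₁]; norm_num
  have hroot : z ^ 2 - z + 1 = 0 := by
    simp only [map_sub, map_one] at h₁
    linear_combination (z - 1) * h₀ - z * h₁
  exact (isRoot_cyclotomic_iff (n := 6)).mp (by simp [cyclotomic_six, hroot])

theorem Complex.six_dvd_of_pow_eq_one {m : ℕ} (hm : m ≠ 0) {a b : ℂ} (ha : a ^ m = 1)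
    (hb : b ^ m = 1) (hab : (a + b) ^ m = 1) : 6 ∣ m := by
  have ha₀ : a ≠ 0 := by rintro rfl; simp [hm] at ha
  have hs : ((a + b) / a) ^ m = 1 := by rw [div_pow, hab, ha, div_one]
  have hs₁ : (a + b) / a - 1 = b / a := by field_simp; ring
  have hprim : IsPrimitiveRoot ((a + b) / a) 6 := by
    refine Complex.isPrimitiveRoot_six_of_norm_eq_one (Complex.norm_eq_one_of_pow_eq_one hs hm) ?_
    rw [hs₁]
    exact Complex.norm_eq_one_of_pow_eq_one (by rw [div_pow, hb, ha, div_one]) hm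
  exact hprim.dvd_of_pow_eq_one m hs

namespace Module.End

variable {K V : Type*} [Field K] [AddCommGroup V] [Module K V]

theorem isSemisimple_of_pow_eq_one [FiniteDimensional K V] {f : End K V} {m : ℕ} (hf : f ^ m = 1)
    (hm : (m : K) ≠ 0) : f.IsSemisimple := by
  refine isSemisimple_of_squarefree_aeval_eq_zero
    (separable_X_pow_sub_C (1 : K) hm one_ne_zero).squarefree ?_
  simp [hf]

theorem HasEigenvector.pow_eq_one {f : End K V} {m : ℕ} (hf : f ^ m = 1) {μ : K} {v : V}
    (hv : f.HasEigenvector μ v) : μ ^ m = 1 := by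
  have h : μ ^ m • v = (1 : K) • v := by rw [← hv.pow_apply, hf, one_apply, one_smul]
  exact smul_left_injective K hv.2 h

end Module.End

open Module.End

theorem LieDerivation.lie_mem_eigenspace {R L : Type*} [CommRing R] [LieRing L] [LieAlgebra R L]
    (D : LieDerivation R L L) {μ ν : R} {x y : L} (hx : x ∈ eigenspace D.toLinearMap μ)
    (hy : y ∈ eigenspace D.toLinearMap ν) : ⁅x, y⁆ ∈ eigenspace D.toLinearMap (μ + ν) := by
  rw [mem_eigenspace_iff] at hx hy ⊢
  have hD : D.toLinearMap ⁅x, y⁆ = ⁅x, D.toLinearMap y⁆ + ⁅D.toLinearMap x, y⁆ :=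
    D.apply_lie_eq_add x y
  rw [hD, hx, hy, smul_lie, lie_smul, add_smul, add_comm]

theorem lie_eq_zero_of_iSup_eq_top {K L ι : Type*} [CommRing K] [LieRing L] [LieAlgebra K L]
    {p : ι → Submodule K L} (hp : ⨆ i, p i = ⊤)
    (h : ∀ i j, ∀ x ∈ p i, ∀ y ∈ p j, ⁅x, y⁆ = 0) (x y : L) : ⁅x, y⁆ = 0 := by
  have hx : x ∈ ⨆ i, p i := hp ▸ Submodule.mem_top
  have hy : y ∈ ⨆ i, p i := hp ▸ Submodule.mem_top
  refine Submodule.iSup_induction p (motive := fun x ↦ ⁅x, y⁆ = 0) hx (fun i x hx ↦ ?_)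
    (zero_lie y) (fun x₁ x₂ h₁ h₂ ↦ by rw [add_lie, h₁, h₂, add_zero])
  exact Submodule.iSup_induction p (motive := fun y ↦ ⁅x, y⁆ = 0) hy (fun j y hy ↦ h i j x hx y hy)
    (lie_zero x) (fun y₁ y₂ h₁ h₂ ↦ by rw [lie_add, h₁, h₂, add_zero])

theorem order_multiple_of_six_general (L : Type*) [LieRing L] [LieAlgebra ℂ L]
    [FiniteDimensional ℂ L] (hna : ∃ x y : L, ⁅x, y⁆ ≠ 0)
    (D : LieDerivation ℂ L L) (m : ℕ) (hm : 0 < m)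
    (hDm : D.toLinearMap ^ m = 1) :
    6 ∣ m := by
  have hspan : ⨆ μ : ℂ, eigenspace D.toLinearMap μ = ⊤ :=
    (isSemisimple_of_pow_eq_one hDm (by exact_mod_cast hm.ne')).iSup_eigenspace_eq_top
  obtain ⟨μ, ν, x, hx, y, hy, hxy⟩ : ∃ μ ν, ∃ x ∈ eigenspace D.toLinearMap μ,
      ∃ y ∈ eigenspace D.toLinearMap ν, ⁅x, y⁆ ≠ 0 := by
    obtain ⟨a, b, hab⟩ := hna
    by_contra! h
    exact hab (lie_eq_zero_of_iSup_eq_top hspan h a b)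
  have hx₀ : x ≠ 0 := by rintro rfl; simp at hxy
  have hy₀ : y ≠ 0 := by rintro rfl; simp at hxy
  exact Complex.six_dvd_of_pow_eq_one hm.ne' (HasEigenvector.pow_eq_one hDm ⟨hx, hx₀⟩)
    (HasEigenvector.pow_eq_one hDm ⟨hy, hy₀⟩)
    (HasEigenvector.pow_eq_one hDm ⟨D.lie_mem_eigenspace hx hy, hxy⟩)

theorem order_multiple_of_six (L : Type*) [LieRing L] [LieAlgebra ℂ L]
    [FiniteDimensional ℂ L] (hna : ∃ x y : L, ⁅x, y⁆ ≠ 0)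
    (D : LieDerivation ℂ L L) (m : ℕ) (hm : 0 < m)
    (hDm : D.toLinearMap ^ m = 1)
    (hmin : ∀ k : ℕ, 0 < k → k < m → D.toLinearMap ^ k ≠ 1) :
    6 ∣ m :=
  order_multiple_of_six_general L hna D m hm hDm
end

section
/- The complex Heisenberg Lie algebra of dimension 3 (basis x₁,x₂,x₃ with [x₁,x₂] = x₃ and all other brackets zero) admits a periodic derivation of order six, namely D = diag(1, ω, 1+ω) where ω = e^{2πi/3}. -/
/-!
An endomorphism acting diagonally on the basis with weights `c₀, c₁, c₂` is a derivation of the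
Heisenberg algebra as soon as `c₂ = c₀ + c₁`, since `[x₁, x₂] = x₃` is the only nonzero bracket.
Its order is the order of the weight vector `(1, ω, 1 + ω)`, and `1 + ω = -ω²` has order
`2 · 3 = 6`.
-/

noncomputable def ω : ℂ := Complex.exp (2 * Real.pi * Complex.I / 3)

open Matrix

section Derivation

variable {R L ι : Type*} [CommRing R] [LieRing L] [LieAlgebra R L]

theorem LinearMap.leibniz_of_basis (b : Module.Basis ι R L) (f : L →ₗ[R] L)
    (h : ∀ i j, f ⁅b i, b j⁆ = ⁅f (b i), b j⁆ + ⁅b i, f (b j)⁆) (x y : L) :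
    f ⁅x, y⁆ = ⁅f x, y⁆ + ⁅x, f y⁆ := by
  let ad : L →ₗ[R] L →ₗ[R] L := (LieAlgebra.ad R L : L →ₗ[R] Module.End R L)
  exact LinearMap.congr_fun₂
    (LinearMap.ext_basis (B := ad.compr₂ f) (B' := ad ∘ₗ f + ad.compl₂ f) b b h) x y

def LieDerivation.ofBasis (b : Module.Basis ι R L) (f : L →ₗ[R] L)
    (h : ∀ i j, f ⁅b i, b j⁆ = ⁅f (b i), b j⁆ + ⁅b i, f (b j)⁆) : LieDerivation R L L where
  toLinearMap := f
  leibniz' x y := by rw [f.leibniz_of_basis b h, ← lie_skew y (f x)]; abel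

theorem heisenberg_leibniz_of_diagonal (b : Module.Basis (Fin 3) R L) (h01 : ⁅b 0, b 1⁆ = b 2)
    (h02 : ⁅b 0, b 2⁆ = 0) (h12 : ⁅b 1, b 2⁆ = 0) {f : L →ₗ[R] L} {c : Fin 3 → R}
    (hf : ∀ i, f (b i) = c i • b i) (hc : c 2 = c 0 + c 1) (i j : Fin 3) :
    f ⁅b i, b j⁆ = ⁅f (b i), b j⁆ + ⁅b i, f (b j)⁆ := by
  have h10 : ⁅b 1, b 0⁆ = -b 2 := by rw [← lie_skew, h01]
  have h20 : ⁅b 2, b 0⁆ = 0 := by rw [← lie_skew, h02, neg_zero]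
  have h21 : ⁅b 2, b 1⁆ = 0 := by rw [← lie_skew, h12, neg_zero]
  rw [hf, hf, smul_lie, lie_smul, ← add_smul]
  fin_cases i <;> fin_cases j <;> simp [h01, h02, h12, h10, h20, h21, hf, hc, add_comm (c 1)]

end Derivation

section Diagonal

variable {R M ι : Type*} [CommSemiring R] [AddCommMonoid M] [Module R M] [Fintype ι]
  [DecidableEq ι] (b : Module.Basis ι R M) (c : ι → R)

theorem Matrix.toLinAlgEquiv_diagonal_self (i : ι) :
    toLinAlgEquiv b (diagonal c) (b i) = c i • b i := by
  simp [toLinAlgEquiv_self, diagonal_apply]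

theorem Matrix.orderOf_toLinAlgEquiv_diagonal :
    orderOf (toLinAlgEquiv b (diagonal c)) = orderOf c :=
  ((toLinAlgEquiv b).toMulEquiv.orderOf_eq _).trans
    (orderOf_injective (diagonalRingHom ι R).toMonoidHom diagonal_injective c)

end Diagonal

theorem isPrimitiveRoot_ω : IsPrimitiveRoot ω 3 := by
  simpa [ω] using Complex.isPrimitiveRoot_exp 3 (by norm_num)

theorem one_add_ω : 1 + ω = -ω ^ 2 := by
  have := isPrimitiveRoot_ω.geom_sum_eq_zero (by norm_num)
  simp only [Finset.sum_range_succ, Finset.sum_range_zero] at this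
  linear_combination this

theorem orderOf_one_add_ω : orderOf (1 + ω) = 6 := by
  have hω2 : orderOf (ω ^ 2) = 3 :=
    ((isPrimitiveRoot_ω.pow_of_coprime 2 (by norm_num)).eq_orderOf).symm
  have hcop : (orderOf (-1 : ℂ)).Coprime (orderOf (ω ^ 2)) := by
    rw [orderOf_neg_one, hω2]; norm_num
  rw [one_add_ω, neg_eq_neg_one_mul,
    (Commute.neg_one_left _).orderOf_mul_eq_mul_orderOf_of_coprime hcop, orderOf_neg_one, hω2]
  norm_num

theorem orderOf_vec_one_ω_one_add_ω : orderOf (![1, ω, 1 + ω] : Fin 3 → ℂ) = 6 := by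
  apply Nat.dvd_antisymm
  · apply orderOf_dvd_of_pow_eq_one
    funext i
    fin_cases i
    · simp
    · simpa using (isPrimitiveRoot_ω.pow_eq_one_iff_dvd 6).mpr (by norm_num)
    · simpa [orderOf_one_add_ω] using pow_orderOf_eq_one (1 + ω)
  · simpa [orderOf_one_add_ω] using
      orderOf_map_dvd (Pi.evalMonoidHom (fun _ => ℂ) 2) ![1, ω, 1 + ω]

theorem heisenberg_periodic_derivation (L : Type*) [LieRing L] [LieAlgebra ℂ L]
    (b : Module.Basis (Fin 3) ℂ L)
    (h01 : ⁅b 0, b 1⁆ = b 2)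
    (h02 : ⁅b 0, b 2⁆ = 0) (h12 : ⁅b 1, b 2⁆ = 0) :
    ∃ D : LieDerivation ℂ L L,
      D (b 0) = b 0 ∧ D (b 1) = ω • b 1 ∧ D (b 2) = (1 + ω) • b 2 ∧
      D.toLinearMap ^ 6 = 1 ∧ ∀ k : ℕ, 0 < k → k < 6 → D.toLinearMap ^ k ≠ 1 := by
  set c : Fin 3 → ℂ := ![1, ω, 1 + ω]
  have hf := toLinAlgEquiv_diagonal_self b c
  let D := LieDerivation.ofBasis b _ (heisenberg_leibniz_of_diagonal b h01 h02 h12 hf rfl)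
  have hD : orderOf D.toLinearMap = 6 :=
    (orderOf_toLinAlgEquiv_diagonal b c).trans orderOf_vec_one_ω_one_add_ω
  obtain ⟨h6, hlt⟩ := (orderOf_eq_iff (by norm_num)).mp hD
  exact ⟨D, (hf 0).trans (one_smul ℂ _), hf 1, hf 2, h6, fun k hk hk6 => hlt k hk6 hk⟩
end

section
/- The 7-dimensional two-step nilpotent complex Lie algebra with basis x₁,...,x₇ and brackets [x₁,x₂] = x₅, [x₁,x₃] = x₆, [x₂,x₃] = x₇, [x₃,x₄] = -x₅ admits no periodic derivation (no derivation D with D^m = id for some m ≥ 1). -/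
/-!
A derivation `D` of this algebra preserves the flag
`⟨x₅⟩ ⊂ ⟨x₅, x₆, x₇⟩ ⊂ ⟨x₄, …, x₇⟩ ⊂ ⟨x₁, x₂, x₄, …, x₇⟩ ⊂ L`, so its matrix is block
triangular, and if `D` is periodic every eigenvalue of a diagonal block is a root of unity.
Let `λ₀, λ₁` be the eigenvalues of the block on `⟨x₁, x₂⟩` and `p, t` the diagonal entries at
`x₃, x₄`. The Leibniz rule makes `λ₀ + λ₁ = p + t` the eigenvalue at `x₅` and `λ₀ + p, λ₁ + p`
the eigenvalues on `⟨x₆, x₇⟩`. Unit complex numbers `a, b` with `a + b` a unit satisfy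
`a² + ab + b² = 0`, so `λ₀, λ₁` are both roots of `X² + pX + p²`: either `λ₀ = λ₁` and
`|λ₀ + λ₁| = 2`, or `λ₀ + λ₁ = -p` and `|t| = 2`.
-/

namespace Module.End

open Matrix

variable {K V : Type*} [Field K] [AddCommGroup V] [Module K V] {f : End K V} {m : ℕ}

theorem pow_eq_one_of_sub_smul_mem (hf : f ^ m = 1) {S : Submodule K V} (hS : S ≤ S.comap f)
    {v : V} (hv : v ∉ S) {μ : K} (h : f v - μ • v ∈ S) : μ ^ m = 1 := by
  have hpow : ∀ k : ℕ, (f ^ k) v - μ ^ k • v ∈ S := by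
    intro k
    induction k with
    | zero => simp
    | succ k ih =>
      have hsplit : (f ^ (k + 1)) v - μ ^ (k + 1) • v =
          f ((f ^ k) v - μ ^ k • v) + μ ^ k • (f v - μ • v) := by
        rw [pow_succ', mul_apply, map_sub, map_smul, pow_succ]
        module
      rw [hsplit]
      exact add_mem (hS ih) (S.smul_mem _ h)
  by_contra hμ
  have hm : (1 - μ ^ m) • v ∈ S := by simpa [hf, sub_smul] using hpow m
  exact hv ((Submodule.smul_mem_iff S (sub_ne_zero.mpr (Ne.symm hμ))).mp hm)

variable {ι κ α : Type*} [Fintype ι] [DecidableEq ι] [Fintype κ] [LinearOrder α]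

theorem pow_eq_one_of_blockTriangular_of_mulVec (hf : f ^ m = 1) (b : Basis ι K V)
    {β : ι → α} (hA : (LinearMap.toMatrix b b f).BlockTriangular β) {k : α} {e : κ → ι}
    (he : Function.Injective e) (hek : ∀ i, β i = k ↔ i ∈ Set.range e) {x : κ → K}
    (hx : x ≠ 0) {μ : K} (hμ : (LinearMap.toMatrix b b f).submatrix e e *ᵥ x = μ • x) :
    μ ^ m = 1 := by
  set S := Submodule.span K (b '' {i | β i < k})
  have mem_S : ∀ w, w ∈ S ↔ ∀ i, b.repr w i ≠ 0 → β i < k := fun w => by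
    simp [S, b.mem_span_image, Set.subset_def]
  set v := ∑ c, x c • b (e c)
  have repr_v : ∀ i, b.repr v i = ∑ c, if e c = i then x c else 0 := fun i => by
    simp [v, Finsupp.single_apply]
  have repr_v_e : ∀ c, b.repr v (e c) = x c := fun c => by
    rw [repr_v, Finset.sum_eq_single c (fun c' _ hc' => if_neg (he.ne hc')) (by simp)]
    exact if_pos rfl
  have repr_fv : ∀ i, b.repr (f v - μ • v) i =
      ∑ c, LinearMap.toMatrix b b f i (e c) * x c - μ * b.repr v i := fun i => by
    simp [v, LinearMap.toMatrix_apply, mul_comm]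
  have hek' : ∀ c, β (e c) = k := fun c => (hek _).mpr ⟨c, rfl⟩
  refine pow_eq_one_of_sub_smul_mem hf (S := S) ?_ (v := v) ?_ ?_
  · refine Submodule.span_le.mpr ?_
    rintro _ ⟨j, hj, rfl⟩
    refine (mem_S _).mpr fun i hi => lt_of_le_of_lt ?_ hj
    exact not_lt.mp fun hlt => hi (by simpa [LinearMap.toMatrix_apply] using hA hlt)
  · obtain ⟨c, hc⟩ := Function.ne_iff.mp hx
    refine fun hvS => lt_irrefl k ?_
    simpa [hek'] using (mem_S v).mp hvS (e c) (by simpa [repr_v_e] using hc)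
  · refine (mem_S _).mpr fun i hi => lt_of_not_ge fun hki => hi ?_
    rw [repr_fv]
    rcases hki.lt_or_eq with hlt | heq
    · have hzero : ∀ c, LinearMap.toMatrix b b f i (e c) = 0 := fun c => hA (hek' c ▸ hlt)
      have hvi : b.repr v i = 0 := by
        rw [repr_v]
        refine Finset.sum_eq_zero fun c _ => if_neg fun hci => hlt.ne ?_
        rw [← hci, hek']
      simp [hzero, hvi]
    · obtain ⟨c, rfl⟩ := (hek i).mp heq.symm
      have hμc := congrFun hμ c
      simp only [mulVec, dotProduct, submatrix_apply, Pi.smul_apply, smul_eq_mul] at hμc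
      rw [repr_v_e, hμc, sub_self]

theorem toMatrix_diag_pow_eq_one_of_blockTriangular (hf : f ^ m = 1) (b : Basis ι K V)
    {β : ι → α} (hA : (LinearMap.toMatrix b b f).BlockTriangular β) {j : ι}
    (hj : ∀ i, β i = β j → i = j) :
    LinearMap.toMatrix b b f j j ^ m = 1 :=
  pow_eq_one_of_blockTriangular_of_mulVec (κ := Unit) hf b hA (e := fun _ => j)
    (fun _ _ _ => rfl) (fun i => ⟨fun h => ⟨(), (hj i h).symm⟩, by rintro ⟨_, rfl⟩; rfl⟩)
    one_ne_zero (by ext; simp [mulVec, dotProduct])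

theorem pow_eq_one_of_blockTriangular_of_charpoly_two (hf : f ^ m = 1) (b : Basis ι K V)
    {β : ι → α} (hA : (LinearMap.toMatrix b b f).BlockTriangular β) {j₀ j₁ : ι} (hne : j₀ ≠ j₁)
    (hj : ∀ i, β i = β j₀ ↔ i = j₀ ∨ i = j₁) {μ : K}
    (hμ : (μ - LinearMap.toMatrix b b f j₀ j₀) * (μ - LinearMap.toMatrix b b f j₁ j₁) =
      LinearMap.toMatrix b b f j₀ j₁ * LinearMap.toMatrix b b f j₁ j₀) :
    μ ^ m = 1 := by
  set B := (LinearMap.toMatrix b b f).submatrix ![j₀, j₁] ![j₀, j₁]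
  have hdet : (B - μ • 1).det = 0 := by
    rw [det_fin_two]
    simp only [B, Matrix.sub_apply, Matrix.smul_apply, submatrix_apply, one_apply_eq,
      one_apply_ne zero_ne_one, one_apply_ne one_ne_zero, smul_eq_mul, cons_val_zero,
      cons_val_one, cons_val_fin_one, mul_one, mul_zero, sub_zero]
    linear_combination hμ
  obtain ⟨x, hx, hBx⟩ := exists_mulVec_eq_zero_iff.mpr hdet
  refine pow_eq_one_of_blockTriangular_of_mulVec hf b hA (k := β j₀) (e := ![j₀, j₁]) ?_ ?_ hx ?_
  · intro c c' h
    fin_cases c <;> fin_cases c' <;> simp_all [eq_comm]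
  · intro i
    simp [hj, eq_comm, or_comm]
  · rwa [sub_mulVec, smul_mulVec, one_mulVec, sub_eq_zero] at hBx

end Module.End

/-- `b` is a basis of `N(2,4)/I₅` with its standard brackets; `b i` is the paper's `x_{i+1}`. -/
structure IsN24I5Basis {K L : Type*} [Field K] [LieRing L] [LieAlgebra K L]
    (b : Module.Basis (Fin 7) K L) : Prop where
  lie_0_1 : ⁅b 0, b 1⁆ = b 4
  lie_0_2 : ⁅b 0, b 2⁆ = b 5
  lie_1_2 : ⁅b 1, b 2⁆ = b 6
  lie_2_3 : ⁅b 2, b 3⁆ = -b 4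
  lie_0_3 : ⁅b 0, b 3⁆ = 0
  lie_1_3 : ⁅b 1, b 3⁆ = 0
  lie_central : ∀ i j : Fin 7, 4 ≤ j → ⁅b i, b j⁆ = 0

namespace IsN24I5Basis

variable {K L : Type*} [Field K] [LieRing L] [LieAlgebra K L] {b : Module.Basis (Fin 7) K L}

theorem lie_eq (hb : IsN24I5Basis b) (x y : L) :
    ⁅x, y⁆ = (b.repr x 0 * b.repr y 1 - b.repr x 1 * b.repr y 0 - b.repr x 2 * b.repr y 3
        + b.repr x 3 * b.repr y 2) • b 4
      + (b.repr x 0 * b.repr y 2 - b.repr x 2 * b.repr y 0) • b 5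
      + (b.repr x 1 * b.repr y 2 - b.repr x 2 * b.repr y 1) • b 6 := by
  have hlie : ∀ i j : Fin 7, ⁅b i, b j⁆ = -⁅b j, b i⁆ := fun i j => (lie_skew _ _).symm
  have central : ∀ i j : Fin 7, 4 ≤ i → ⁅b i, b j⁆ = 0 := fun i j hi => by
    rw [hlie, hb.lie_central j i hi, neg_zero]
  rw [← b.sum_repr x, ← b.sum_repr y]
  simp only [Fin.sum_univ_seven, add_lie, lie_add, smul_lie, lie_smul, map_add, map_smul,
    b.repr_self]
  simp [hlie 1 0, hlie 2 0, hlie 2 1, hlie 3 0, hlie 3 1, hlie 3 2, hb.lie_0_1, hb.lie_0_2,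
    hb.lie_1_2, hb.lie_2_3, hb.lie_0_3, hb.lie_1_3, hb.lie_central, central]
  module

variable (D : LieDerivation K L L)

theorem repr_derivation_eq_zero [NeZero (2 : K)] (hb : IsN24I5Basis b) :
    b.repr (D (b 0)) 2 = 0 ∧ b.repr (D (b 1)) 2 = 0 ∧
      b.repr (D (b 3)) 0 = 0 ∧ b.repr (D (b 3)) 1 = 0 ∧ b.repr (D (b 3)) 2 = 0 := by
  have e := fun (j k i : Fin 7) => congr(b.repr $(D.apply_lie_eq_add (b j) (b k)) i)
  have e015 := e 0 1 5
  have e016 := e 0 1 6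
  have e034 := e 0 3 4
  have e035 := e 0 3 5
  have e134 := e 1 3 4
  have e235 := e 2 3 5
  have e236 := e 2 3 6
  simp [hb.lie_eq] at e015 e016 e034 e035 e134 e235 e236
  -- `D (b 4)` is computed twice, from `⁅b 0, b 1⁆ = b 4` and from `⁅b 2, b 3⁆ = -b 4`.
  have h02 : (2 : K) * b.repr (D (b 0)) 2 = 0 := by linear_combination e016 - e236 + e034
  have h12 : (2 : K) * b.repr (D (b 1)) 2 = 0 := by linear_combination e235 - e015 + e134
  simp only [mul_eq_zero, two_ne_zero, false_or] at h02 h12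
  exact ⟨h02, h12, by linear_combination e134 - h12, by linear_combination h02 - e034, e035.symm⟩

theorem derivation_apply_four [NeZero (2 : K)] (hb : IsN24I5Basis b) :
    D (b 4) = (b.repr (D (b 0)) 0 + b.repr (D (b 1)) 1) • b 4 := by
  obtain ⟨h02, h12, -⟩ := hb.repr_derivation_eq_zero D
  refine b.ext_elem fun i => ?_
  have h := congr(b.repr $(D.apply_lie_eq_add (b 0) (b 1)) i)
  fin_cases i <;> simp [hb.lie_eq, h02, h12] at h ⊢ <;> linear_combination h

theorem derivation_apply_five (hb : IsN24I5Basis b) :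
    D (b 5) = (b.repr (D (b 2)) 1 + b.repr (D (b 0)) 3) • b 4
      + (b.repr (D (b 0)) 0 + b.repr (D (b 2)) 2) • b 5 + b.repr (D (b 0)) 1 • b 6 := by
  refine b.ext_elem fun i => ?_
  have h := congr(b.repr $(D.apply_lie_eq_add (b 0) (b 2)) i)
  fin_cases i <;> simp [hb.lie_eq] at h ⊢ <;> linear_combination h

theorem derivation_apply_six (hb : IsN24I5Basis b) :
    D (b 6) = (b.repr (D (b 1)) 3 - b.repr (D (b 2)) 0) • b 4
      + b.repr (D (b 1)) 0 • b 5 + (b.repr (D (b 1)) 1 + b.repr (D (b 2)) 2) • b 6 := by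
  refine b.ext_elem fun i => ?_
  have h := congr(b.repr $(D.apply_lie_eq_add (b 1) (b 2)) i)
  fin_cases i <;> simp [hb.lie_eq] at h ⊢ <;> linear_combination h

theorem derivation_trace_eq (hb : IsN24I5Basis b) :
    b.repr (D (b 0)) 0 + b.repr (D (b 1)) 1 = b.repr (D (b 2)) 2 + b.repr (D (b 3)) 3 := by
  have h01 := congr(b.repr $(D.apply_lie_eq_add (b 0) (b 1)) 4)
  have h23 := congr(b.repr $(D.apply_lie_eq_add (b 2) (b 3)) 4)
  simp [hb.lie_eq] at h01 h23
  linear_combination -h01 - h23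

theorem toMatrix_derivation_blockTriangular [NeZero (2 : K)] (hb : IsN24I5Basis b) :
    (LinearMap.toMatrix b b D.toLinearMap).BlockTriangular ![3, 3, 4, 2, 0, 1, 1] := by
  obtain ⟨h02, h12, h30, h31, h32⟩ := hb.repr_derivation_eq_zero D
  intro i j hij
  rw [LinearMap.toMatrix_apply]
  fin_cases i <;> fin_cases j <;> simp at hij ⊢ <;>
    simp [h02, h12, h30, h31, h32, hb.derivation_apply_four D, hb.derivation_apply_five D,
      hb.derivation_apply_six D]

variable {m : ℕ}

theorem diag_pow_eq_one_of_pow_eq_one [NeZero (2 : K)] (hb : IsN24I5Basis b)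
    (hD : D.toLinearMap ^ m = 1) :
    (b.repr (D (b 0)) 0 + b.repr (D (b 1)) 1) ^ m = 1 ∧ b.repr (D (b 2)) 2 ^ m = 1 ∧
      b.repr (D (b 3)) 3 ^ m = 1 := by
  have hdiag := fun j hj => Module.End.toMatrix_diag_pow_eq_one_of_blockTriangular hD b
    (hb.toMatrix_derivation_blockTriangular D) (j := j) hj
  simp only [LinearMap.toMatrix_apply, LieDerivation.coeFn_coe] at hdiag
  refine ⟨?_, hdiag 2 (by decide), hdiag 3 (by decide)⟩
  simpa [hb.derivation_apply_four D] using hdiag 4 (by decide)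

theorem eigenvalue_pow_eq_one_of_pow_eq_one [NeZero (2 : K)] (hb : IsN24I5Basis b)
    (hD : D.toLinearMap ^ m = 1) {μ : K}
    (hμ : (μ - b.repr (D (b 0)) 0) * (μ - b.repr (D (b 1)) 1) =
      b.repr (D (b 1)) 0 * b.repr (D (b 0)) 1) :
    μ ^ m = 1 ∧ (μ + b.repr (D (b 2)) 2) ^ m = 1 := by
  have hA := hb.toMatrix_derivation_blockTriangular D
  constructor
  · refine Module.End.pow_eq_one_of_blockTriangular_of_charpoly_two hD b hA (j₀ := 0) (j₁ := 1)
      (by decide) (by decide) ?_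
    simpa only [LinearMap.toMatrix_apply, LieDerivation.coeFn_coe] using hμ
  · refine Module.End.pow_eq_one_of_blockTriangular_of_charpoly_two hD b hA (j₀ := 5) (j₁ := 6)
      (by decide) (by decide) ?_
    simp [LinearMap.toMatrix_apply, hb.derivation_apply_five D, hb.derivation_apply_six D]
    linear_combination hμ

end IsN24I5Basis

open ComplexConjugate in
theorem Complex.sq_add_mul_add_sq_eq_zero {x y : ℂ} (hx : ‖x‖ = 1) (hy : ‖y‖ = 1)
    (hxy : ‖x + y‖ = 1) : x ^ 2 + x * y + y ^ 2 = 0 := by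
  have hxx := Complex.mul_conj' x
  have hyy := Complex.mul_conj' y
  have hss := Complex.mul_conj' (x + y)
  rw [hx] at hxx
  rw [hy] at hyy
  rw [hxy, map_add] at hss
  push_cast at hxx hyy hss
  have hcross : x * conj y + y * conj x = -1 := by linear_combination hss - hxx - hyy
  linear_combination (-y ^ 2) * hxx - x ^ 2 * hyy + x * y * hcross

theorem Complex.norm_add_ne_one {l₀ l₁ p t : ℂ} (h₀ : ‖l₀‖ = 1) (h₁ : ‖l₁‖ = 1) (hp : ‖p‖ = 1)
    (ht : ‖t‖ = 1) (h₀p : ‖l₀ + p‖ = 1) (h₁p : ‖l₁ + p‖ = 1) (h : l₀ + l₁ = p + t) :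
    ‖l₀ + l₁‖ ≠ 1 := by
  intro hs
  by_cases hl : l₀ = l₁
  · rw [← hl, ← two_mul, norm_mul, h₀] at hs
    norm_num at hs
  · have hsum : l₀ + l₁ = -p := by
      have hfac : (l₀ - l₁) * (l₀ + l₁ + p) = 0 := by
        linear_combination
          sq_add_mul_add_sq_eq_zero h₀ hp h₀p - sq_add_mul_add_sq_eq_zero h₁ hp h₁p
      linear_combination (mul_eq_zero.mp hfac).resolve_left (sub_ne_zero.mpr hl)
    rw [show t = -2 * p by linear_combination hsum - h, norm_mul, hp] at ht
    norm_num at ht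

theorem no_periodic_derivation_dim7 (L : Type*) [LieRing L] [LieAlgebra ℂ L]
    (b : Module.Basis (Fin 7) ℂ L)
    (h01 : ⁅b 0, b 1⁆ = b 4) (h02 : ⁅b 0, b 2⁆ = b 5) (h12 : ⁅b 1, b 2⁆ = b 6)
    (h23 : ⁅b 2, b 3⁆ = -b 4) (h03 : ⁅b 0, b 3⁆ = 0) (h13 : ⁅b 1, b 3⁆ = 0)
    (hcen : ∀ i j : Fin 7, 4 ≤ j → ⁅b i, b j⁆ = 0) :
    ¬ ∃ D : LieDerivation ℂ L L, ∃ m : ℕ, 1 ≤ m ∧ D.toLinearMap ^ m = 1 := by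
  rintro ⟨D, m, hm, hDm⟩
  have hb : IsN24I5Basis b := ⟨h01, h02, h12, h23, h03, h13, hcen⟩
  have norm_eq_one : ∀ z : ℂ, z ^ m = 1 → ‖z‖ = 1 :=
    fun z hz => Complex.norm_eq_one_of_pow_eq_one hz (by omega)
  obtain ⟨hτ, hp, ht⟩ := hb.diag_pow_eq_one_of_pow_eq_one D hDm
  obtain ⟨μ, hμ⟩ : ∃ μ, (μ - b.repr (D (b 0)) 0) * (μ - b.repr (D (b 1)) 1) =
      b.repr (D (b 1)) 0 * b.repr (D (b 0)) 1 := by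
    obtain ⟨μ, hμ⟩ := exists_quadratic_eq_zero one_ne_zero (IsAlgClosed.exists_eq_mul_self _)
      (b := -(b.repr (D (b 0)) 0 + b.repr (D (b 1)) 1))
      (c := b.repr (D (b 0)) 0 * b.repr (D (b 1)) 1 - b.repr (D (b 1)) 0 * b.repr (D (b 0)) 1)
    exact ⟨μ, by linear_combination hμ⟩
  set μ' := b.repr (D (b 0)) 0 + b.repr (D (b 1)) 1 - μ
  obtain ⟨h₀, h₀p⟩ := hb.eigenvalue_pow_eq_one_of_pow_eq_one D hDm hμ
  obtain ⟨h₁, h₁p⟩ := hb.eigenvalue_pow_eq_one_of_pow_eq_one D hDm (μ := μ')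
    (by linear_combination hμ)
  refine Complex.norm_add_ne_one (norm_eq_one _ h₀) (norm_eq_one _ h₁) (norm_eq_one _ hp)
    (norm_eq_one _ ht) (norm_eq_one _ h₀p) (norm_eq_one _ h₁p)
    (by linear_combination hb.derivation_trace_eq D) ?_
  rw [add_sub_cancel]
  exact norm_eq_one _ hτ
end

section
/- A nonabelian finite-dimensional complex Lie algebra which is triangularly graded is two-step nilpotent, i.e., [g,[g,g]] = 0. -/
/-- A complex Lie algebra is hexagonally graded if it admits a grading by sixth roots of
unity, multiplicative on brackets, with the components indexed by third roots of unity
central. -/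
def IsHexagonallyGraded (L : Type*) [LieRing L] [LieAlgebra ℂ L] : Prop :=
  ∃ g : ℂ → Submodule ℂ L,
    (∀ ζ : ℂ, ζ ^ 6 ≠ 1 → g ζ = ⊥) ∧
    (DirectSum.IsInternal fun ζ : ℂ => g ζ) ∧
    (∀ ζ η : ℂ, ∀ x ∈ g ζ, ∀ y ∈ g η, ⁅x, y⁆ ∈ g (ζ * η)) ∧
    (∀ ζ : ℂ, ζ ^ 3 = 1 → ∀ x ∈ g ζ, ∀ y : L, ⁅x, y⁆ = 0)

/-- A complex Lie algebra is triangularly graded if it admits an additive grading by the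
nonzero complex numbers such that nonvanishing of `⁅g α, g β⁆` forces `β = ω α` for a
primitive third root of unity `ω`. -/
def IsTriangularlyGraded (L : Type*) [LieRing L] [LieAlgebra ℂ L] : Prop :=
  ∃ g : ℂ → Submodule ℂ L,
    g 0 = ⊥ ∧
    {α : ℂ | g α ≠ ⊥}.Finite ∧
    (DirectSum.IsInternal fun α : ℂ => g α) ∧
    (∀ α β : ℂ, ∀ x ∈ g α, ∀ y ∈ g β, ⁅x, y⁆ ∈ g (α + β)) ∧
    (∀ α β : ℂ, (∃ x ∈ g α, ∃ y ∈ g β, ⁅x, y⁆ ≠ (0 : L)) →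
      ∃ ω : ℂ, ω ^ 3 = 1 ∧ ω ≠ 1 ∧ β = ω * α)

/-- If `ω` is a primitive cube root of unity and `ζ, ξ` are cube roots of unity with
`ζ + ω ζ = ξ`, we get a contradiction: cubing gives `-1 = 1`. -/
lemma cube_root_aux (ω ζ ξ : ℂ) (hω : ω ^ 3 = 1) (hω1 : ω ≠ 1)
    (hζ : ζ ^ 3 = 1) (hξ : ξ ^ 3 = 1) (h : ζ + ω * ζ = ξ) : False := by
  have hsum : ω ^ 2 + ω + 1 = 0 := by
    have hfac : (ω - 1) * (ω ^ 2 + ω + 1) = 0 := by linear_combination hω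
    exact (mul_eq_zero.1 hfac).resolve_left (sub_ne_zero.mpr hω1)
  have hcube : (ζ + ω * ζ) ^ 3 = -1 := by
    linear_combination ((1 + ω) ^ 3) * hζ + hω + 3 * hsum
  rw [h, hξ] at hcube
  norm_num at hcube

theorem two_step_of_triangularly_graded (L : Type*) [LieRing L] [LieAlgebra ℂ L]
    [FiniteDimensional ℂ L] (hna : ∃ x y : L, ⁅x, y⁆ ≠ 0)
    (h : IsTriangularlyGraded L) :
    ∀ x y z : L, ⁅x, ⁅y, z⁆⁆ = 0 := by
  obtain ⟨g, hg0, hfin, hint, hmul, hroot⟩ := h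
  -- the key result for homogeneous elements
  have key : ∀ α β γ : ℂ, ∀ x ∈ g α, ∀ y ∈ g β, ∀ z ∈ g γ, ⁅x, ⁅y, z⁆⁆ = 0 := by
    intro α β γ x hx y hy z hz
    by_contra hne
    have hyz : ⁅y, z⁆ ≠ 0 := fun h0 => hne (by simp [h0])
    obtain ⟨ω, hω3, hω1, hγ⟩ := hroot β γ ⟨y, hy, z, hz, hyz⟩
    have hyzg : ⁅y, z⁆ ∈ g (β + γ) := hmul β γ y hy z hz
    obtain ⟨ω', hω'3, hω'1, hβγ⟩ := hroot α (β + γ) ⟨x, hx, ⁅y, z⁆, hyzg, hne⟩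
    have hα : α ≠ 0 := by
      rintro rfl
      have hx0 : x = 0 := by simpa [hg0] using hx
      simp [hx0] at hne
    have hJ : ⁅x, ⁅y, z⁆⁆ = ⁅⁅x, y⁆, z⁆ + ⁅y, ⁅x, z⁆⁆ := leibniz_lie x y z
    by_cases h1 : ⁅⁅x, y⁆, z⁆ = 0
    · -- then ⁅y, ⁅x, z⁆⁆ ≠ 0, in particular ⁅x, z⁆ ≠ 0, so γ = ω₂ * α
      have h2 : ⁅y, ⁅x, z⁆⁆ ≠ 0 := by
        intro h0; rw [hJ, h1, h0, add_zero] at hne; exact hne rfl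
      have hxz : ⁅x, z⁆ ≠ 0 := fun h0 => h2 (by simp [h0])
      obtain ⟨ω₂, hω₂3, hω₂1, hγ2⟩ := hroot α γ ⟨x, hx, z, hz, hxz⟩
      -- β = ω² * γ = ω² * ω₂ * α, so β + γ = ω₂ α + ω² ω₂ α = ω' α
      have hc : (ω₂ + ω ^ 2 * ω₂) * α = ω' * α := by
        linear_combination hβγ - (1 + ω ^ 2) * hγ2 + ω ^ 2 * hγ + β * hω3
      have hc' : ω₂ + ω ^ 2 * ω₂ = ω' := mul_right_cancel₀ hα hc
      have hω2ne : (ω ^ 2 : ℂ) ≠ 1 := by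
        intro h0
        apply hω1
        calc ω = ω * ω ^ 2 := by rw [h0, mul_one]
        _ = 1 := by linear_combination hω3
      exact cube_root_aux (ω ^ 2) ω₂ ω' (by linear_combination (ω ^ 3 + 1) * hω3) hω2ne hω₂3 hω'3 hc'
    · -- ⁅x, y⁆ ≠ 0, so β = ω₁ * α
      have hxy : ⁅x, y⁆ ≠ 0 := fun h0 => h1 (by simp [h0])
      obtain ⟨ω₁, hω₁3, hω₁1, hβ1⟩ := hroot α β ⟨x, hx, y, hy, hxy⟩
      have hc : (ω₁ + ω * ω₁) * α = ω' * α := by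
        linear_combination hβγ - hγ - hβ1 - ω * hβ1
      have hc' : ω₁ + ω * ω₁ = ω' := mul_right_cancel₀ hα hc
      exact cube_root_aux ω ω₁ ω' hω3 hω1 hω₁3 hω'3 hc'
  -- reduce to homogeneous elements
  have htop : (⨆ α : ℂ, g α) = ⊤ := hint.submodule_iSup_eq_top
  intro x y z
  have hx : x ∈ ⨆ α : ℂ, g α := htop ▸ Submodule.mem_top
  induction hx using Submodule.iSup_induction' with
  | mem α x hxα =>
    have hy : y ∈ ⨆ α : ℂ, g α := htop ▸ Submodule.mem_top
    induction hy using Submodule.iSup_induction' with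
    | mem β y hyβ =>
      have hz : z ∈ ⨆ α : ℂ, g α := htop ▸ Submodule.mem_top
      induction hz using Submodule.iSup_induction' with
      | mem γ z hzγ => exact key α β γ x hxα y hyβ z hzγ
      | zero => simp
      | add z₁ z₂ _ _ ih₁ ih₂ => rw [lie_add, lie_add, ih₁, ih₂, add_zero]
    | zero => simp
    | add y₁ y₂ _ _ ih₁ ih₂ => rw [add_lie, lie_add, ih₁, ih₂, add_zero]
  | zero => simp
  | add x₁ x₂ _ _ ih₁ ih₂ => rw [add_lie, ih₁, ih₂, add_zero]
end

section
/- Let g be a finite-dimensional complex Lie algebra admitting a nonsingular derivation D whose inverse D^{-1} is again a derivation. Then for the eigenspace decomposition with respect to the semisimple part of D, whenever [g_α, g_β] ≠ 0 one has β = ωα for a primitive third root of unity ω; in particular g is triangularly graded. -/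
/-!
The eigenspaces `g_α` of the semisimple part of `D` are the generalized eigenspaces of `D`, and by
the Leibniz rule the bracket of generalized eigenvectors of a derivation for `α` and `β` is one for
`α + β`. A generalized `α`-eigenvector of `D` is a generalized `α⁻¹`-eigenvector of `D⁻¹`, so if
`D⁻¹` is a derivation too, a nonzero element of `⁅g_α, g_β⁆` is a generalized eigenvector of `D⁻¹`
both for `α⁻¹ + β⁻¹` and for `(α + β)⁻¹`. Hence these agree, i.e. `α² + αβ + β² = 0`, and
`β / α` is a primitive cube root of unity.
-/

open Finset

namespace Module.End

variable {R M : Type*} [CommRing R] [AddCommGroup M] [Module R M]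

lemma maxGenEigenspace_zero_eq_top_of_isNilpotent {f : End R M} (hf : IsNilpotent f) :
    f.maxGenEigenspace 0 = ⊤ := by
  obtain ⟨n, hn⟩ := hf
  refine eq_top_iff.2 fun x _ ↦ (mem_maxGenEigenspace f 0 x).2 ⟨n, ?_⟩
  simp [hn]

lemma maxGenEigenspace_zero_eq_bot_of_injective {f : End R M} (hf : Function.Injective f) :
    f.maxGenEigenspace 0 = ⊥ := by
  refine eq_bot_iff.2 fun x hx ↦ ?_
  obtain ⟨k, hk⟩ := (mem_maxGenEigenspace f 0 x).1 hx
  rw [zero_smul, sub_zero, coe_pow] at hk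
  exact (Submodule.mem_bot R).2 (hf.iterate k (hk.trans (iterate_map_zero f k).symm))

lemma ne_zero_of_mem_maxGenEigenspace {f : End R M} (hf : Function.Injective f) {μ : R} {x : M}
    (hx : x ∈ f.maxGenEigenspace μ) (hx₀ : x ≠ 0) : μ ≠ 0 := by
  rintro rfl
  rw [maxGenEigenspace_zero_eq_bot_of_injective hf] at hx
  exact hx₀ ((Submodule.mem_bot R).1 hx)

lemma eigenspace_eq_maxGenEigenspace_of_isNilpotent_sub {f s : End R M}
    (hs : s.IsFinitelySemisimple) (hn : IsNilpotent (f - s)) (hc : Commute f s) (μ : R) :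
    s.eigenspace μ = f.maxGenEigenspace μ := by
  refine le_antisymm ?_ fun x hx ↦
    mem_eigenspace_iff.2 (apply_eq_of_mem_of_comm_of_isFinitelySemisimple_of_isNil hx hc hs hn)
  have h := genEigenspace_inf_le_add s (f - s) μ 0 1 ⊤ (hc.symm.sub_right (Commute.refl s))
  rwa [← maxGenEigenspace, maxGenEigenspace_zero_eq_top_of_isNilpotent hn, inf_top_eq,
    add_sub_cancel, add_zero, add_top] at h

lemma maxGenEigenspace_le_maxGenEigenspace_inv {K M : Type*} [Field K] [AddCommGroup M]
    [Module K M] {f g : End K M} (hgf : g * f = 1) (hfg : f * g = 1) {μ : K} (hμ : μ ≠ 0) :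
    f.maxGenEigenspace μ ≤ g.maxGenEigenspace μ⁻¹ := by
  intro x hx
  obtain ⟨k, hk⟩ := (mem_maxGenEigenspace f μ x).1 hx
  refine (mem_maxGenEigenspace g μ⁻¹ x).2 ⟨k, ?_⟩
  have hfactor : g - μ⁻¹ • 1 = (-μ⁻¹) • (g * (f - μ • 1)) := by
    rw [mul_sub, hgf, Algebra.mul_smul_comm, mul_one, smul_sub, smul_smul, neg_mul,
      inv_mul_cancel₀ hμ]
    module
  have hcomm : Commute g (f - μ • 1) :=
    (show Commute g f from hgf.trans hfg.symm).sub_right ((Commute.one_right g).smul_right μ)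
  rw [hfactor, smul_pow, hcomm.mul_pow, LinearMap.smul_apply, mul_apply, hk, map_zero,
    smul_zero]

end Module.End

section LeibnizRule

variable {R L : Type*} [CommRing R] [LieRing L] [LieAlgebra R L]

lemma pow_apply_lie_eq_sum {f g h : Module.End R L}
    (hfgh : ∀ a b : L, h ⁅a, b⁆ = ⁅f a, b⁆ + ⁅a, g b⁆) (n : ℕ) (a b : L) :
    (h ^ n) ⁅a, b⁆ = ∑ ij ∈ antidiagonal n, n.choose ij.1 • ⁅(f ^ ij.1) a, (g ^ ij.2) b⁆ := by
  induction n with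
  | zero => simp
  | succ n ih =>
    rw [sum_antidiagonal_choose_succ_nsmul (M := L) (fun i j ↦ ⁅(f ^ i) a, (g ^ j) b⁆) n,
      pow_succ', Module.End.mul_apply, ih, map_sum]
    simp only [map_nsmul, hfgh, smul_add, sum_add_distrib, ← Module.End.mul_apply, ← pow_succ']
    rw [add_comm, add_right_inj]
    refine sum_congr rfl fun ⟨i, j⟩ hij ↦ ?_
    rw [n.choose_symm_of_eq_add (mem_antidiagonal.1 hij).symm]

lemma LieDerivation.lie_mem_maxGenEigenspace_add (D : LieDerivation R L L) {α β : R} {x y : L}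
    (hx : x ∈ Module.End.maxGenEigenspace (D : Module.End R L) α)
    (hy : y ∈ Module.End.maxGenEigenspace (D : Module.End R L) β) :
    ⁅x, y⁆ ∈ Module.End.maxGenEigenspace (D : Module.End R L) (α + β) := by
  obtain ⟨k, hk⟩ := (Module.End.mem_maxGenEigenspace _ _ _).1 hx
  obtain ⟨l, hl⟩ := (Module.End.mem_maxGenEigenspace _ _ _).1 hy
  have hshift : ∀ a b : L, ((D : Module.End R L) - (α + β) • 1) ⁅a, b⁆ =
      ⁅((D : Module.End R L) - α • 1) a, b⁆ + ⁅a, ((D : Module.End R L) - β • 1) b⁆ := by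
    intro a b
    simp only [LinearMap.sub_apply, LinearMap.add_apply, LinearMap.smul_apply,
      Module.End.one_apply, coeFn_coe, D.apply_lie_eq_add, sub_lie, lie_sub, smul_lie, lie_smul, add_smul]
    abel
  refine (Module.End.mem_maxGenEigenspace _ _ _).2 ⟨k + l, ?_⟩
  rw [pow_apply_lie_eq_sum hshift]
  refine sum_eq_zero fun ⟨i, j⟩ hij ↦ ?_
  obtain hi | hj : k ≤ i ∨ l ≤ j := by rw [HasAntidiagonal.mem_antidiagonal] at hij; omega
  · rw [Module.End.pow_map_zero_of_le hi hk, zero_lie, smul_zero]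
  · rw [Module.End.pow_map_zero_of_le hj hl, lie_zero, smul_zero]

end LeibnizRule

lemma exists_cube_root_of_unity_of_inv_add_inv_eq {K : Type*} [Field K] [NeZero (3 : K)]
    {α β : K} (hα : α ≠ 0) (hβ : β ≠ 0) (hαβ : α + β ≠ 0) (h : α⁻¹ + β⁻¹ = (α + β)⁻¹) :
    ∃ ω : K, ω ^ 3 = 1 ∧ ω ≠ 1 ∧ β = ω * α := by
  have hquad : α ^ 2 + α * β + β ^ 2 = 0 := by
    field_simp at h
    linear_combination h
  refine ⟨β / α, ?_, ?_, by field_simp⟩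
  · field_simp
    linear_combination (β - α) * hquad
  · rintro hβα
    rw [div_eq_one_iff_eq hα] at hβα
    subst hβα
    have : (3 : K) * β ^ 2 = 0 := by linear_combination hquad
    exact mul_ne_zero three_ne_zero (pow_ne_zero 2 hβ) this

lemma LieDerivation.exists_cube_root_of_unity_of_lie_ne_zero {K L : Type*} [Field K]
    [NeZero (3 : K)] [LieRing L] [LieAlgebra K L] (D E : LieDerivation K L L)
    (hED : E.toLinearMap ∘ₗ D.toLinearMap = LinearMap.id)
    (hDE : D.toLinearMap ∘ₗ E.toLinearMap = LinearMap.id) {α β : K} {x y : L}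
    (hx : x ∈ Module.End.maxGenEigenspace (D : Module.End K L) α)
    (hy : y ∈ Module.End.maxGenEigenspace (D : Module.End K L) β) (hxy : ⁅x, y⁆ ≠ 0) :
    ∃ ω : K, ω ^ 3 = 1 ∧ ω ≠ 1 ∧ β = ω * α := by
  have hD : Function.Injective D := Function.LeftInverse.injective (LinearMap.congr_fun hED)
  have hα : α ≠ 0 := Module.End.ne_zero_of_mem_maxGenEigenspace hD hx (by rintro rfl; simp at hxy)
  have hβ : β ≠ 0 := Module.End.ne_zero_of_mem_maxGenEigenspace hD hy (by rintro rfl; simp at hxy)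
  have hxy' := D.lie_mem_maxGenEigenspace_add hx hy
  have hαβ : α + β ≠ 0 := Module.End.ne_zero_of_mem_maxGenEigenspace hD hxy' hxy
  refine exists_cube_root_of_unity_of_inv_add_inv_eq hα hβ hαβ ?_
  have hle {μ : K} (hμ : μ ≠ 0) := Module.End.maxGenEigenspace_le_maxGenEigenspace_inv hED hDE hμ
  by_contra hne
  exact hxy ((Submodule.mem_bot K).1 ((Module.End.disjoint_genEigenspace _ hne ⊤ ⊤).le_bot
    ⟨E.lie_mem_maxGenEigenspace_add (hle hα hx) (hle hβ hy), hle hαβ hxy'⟩))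

theorem triangular_grading_of_invertible_derivation (L : Type*) [LieRing L]
    [LieAlgebra ℂ L] [FiniteDimensional ℂ L]
    (D E : LieDerivation ℂ L L)
    (hED : E.toLinearMap ∘ₗ D.toLinearMap = LinearMap.id)
    (hDE : D.toLinearMap ∘ₗ E.toLinearMap = LinearMap.id)
    (S : Module.End ℂ L)
    (hS : S.IsSemisimple) (hN : IsNilpotent (D.toLinearMap - S))
    (hC : Commute D.toLinearMap S) :
    (∀ α β : ℂ,
        (∃ x ∈ S.eigenspace α, ∃ y ∈ S.eigenspace β, ⁅x, y⁆ ≠ (0 : L)) →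
        ∃ ω : ℂ, ω ^ 3 = 1 ∧ ω ≠ 1 ∧ β = ω * α) ∧
      IsTriangularlyGraded L := by
  have hSD : ∀ α : ℂ, S.eigenspace α = Module.End.maxGenEigenspace (D : Module.End ℂ L) α :=
    Module.End.eigenspace_eq_maxGenEigenspace_of_isNilpotent_sub hS.isFinitelySemisimple hN hC
  have htri : ∀ α β : ℂ, (∃ x ∈ S.eigenspace α, ∃ y ∈ S.eigenspace β, ⁅x, y⁆ ≠ (0 : L)) →
      ∃ ω : ℂ, ω ^ 3 = 1 ∧ ω ≠ 1 ∧ β = ω * α := by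
    rintro α β ⟨x, hx, y, hy, hxy⟩
    rw [hSD] at hx hy
    exact D.exists_cube_root_of_unity_of_lie_ne_zero E hED hDE hx hy hxy
  refine ⟨htri, S.eigenspace, ?_, S.finite_hasEigenvalue, ?_, fun α β x hx y hy ↦ ?_, htri⟩
  · rw [hSD, Module.End.maxGenEigenspace_zero_eq_bot_of_injective
      (Function.LeftInverse.injective (LinearMap.congr_fun hED))]
  · exact (DirectSum.isInternal_submodule_iff_iSupIndep_and_iSup_eq_top _).2
      ⟨S.eigenspaces_iSupIndep, hS.iSup_eigenspace_eq_top⟩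
  · rw [hSD] at hx hy ⊢
    exact D.lie_mem_maxGenEigenspace_add hx hy
end

section
/- Suppose α, β, γ are m-th roots of unity such that α + β + γ is again an m-th root of unity. Then m is even. Conversely, if m is even, such roots exist (take α = β = 1, γ = -1). -/
/-!
Roots of unity lie on the unit circle, so complex conjugation inverts them. Conjugating
`α + β + γ = δ` therefore gives `α⁻¹ + β⁻¹ + γ⁻¹ = δ⁻¹` as well, and clearing denominators
turns the two equations into `(α + β) (β + γ) (γ + α) = 0`. Hence one root is the negative of
another, so `-1` is itself an `m`-th root of unity and `m` is even.
-/

open ComplexConjugate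

lemma add_mul_add_mul_add_eq_zero_of_inv_add_inv_add_inv {K : Type*} [Field K] {a b c : K}
    (ha : a ≠ 0) (hb : b ≠ 0) (hc : c ≠ 0) (habc : a + b + c ≠ 0)
    (h : (a + b + c)⁻¹ = a⁻¹ + b⁻¹ + c⁻¹) :
    (a + b) * (b + c) * (c + a) = 0 := by
  field_simp at h
  linear_combination -h

lemma neg_one_pow_eq_one_of_add_eq_zero {R : Type*} [CommRing R] {m : ℕ} {a b : R}
    (ha : a ^ m = 1) (hb : b ^ m = 1) (hab : a + b = 0) : (-1 : R) ^ m = 1 := by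
  rw [eq_neg_of_add_eq_zero_right hab, neg_pow, ha, mul_one] at hb
  exact hb

lemma Complex.conj_eq_inv_of_pow_eq_one {z : ℂ} {m : ℕ} (hz : z ^ m = 1) (hm : m ≠ 0) :
    conj z = z⁻¹ :=
  (Complex.inv_eq_conj (Complex.norm_eq_one_of_pow_eq_one hz hm)).symm

lemma ne_zero_of_pow_eq_one {M : Type*} [MonoidWithZero M] [Nontrivial M] {z : M} {m : ℕ}
    (hz : z ^ m = 1) (hm : m ≠ 0) : z ≠ 0 := by
  rintro rfl
  simp [zero_pow hm] at hz

theorem roots_sum_three (m : ℕ) (hm : 0 < m) :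
    (∃ α β γ : ℂ, α ^ m = 1 ∧ β ^ m = 1 ∧ γ ^ m = 1 ∧ (α + β + γ) ^ m = 1) ↔ Even m := by
  refine ⟨?_, fun h ↦ ⟨1, 1, -1, one_pow m, one_pow m, h.neg_one_pow, by simp⟩⟩
  rintro ⟨α, β, γ, hα, hβ, hγ, hs⟩
  have hm₀ : m ≠ 0 := hm.ne'
  have hinv : (α + β + γ)⁻¹ = α⁻¹ + β⁻¹ + γ⁻¹ := by
    rw [← Complex.conj_eq_inv_of_pow_eq_one hs hm₀, map_add, map_add,
      Complex.conj_eq_inv_of_pow_eq_one hα hm₀, Complex.conj_eq_inv_of_pow_eq_one hβ hm₀,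
      Complex.conj_eq_inv_of_pow_eq_one hγ hm₀]
  have hprod := add_mul_add_mul_add_eq_zero_of_inv_add_inv_add_inv
    (ne_zero_of_pow_eq_one hα hm₀) (ne_zero_of_pow_eq_one hβ hm₀)
    (ne_zero_of_pow_eq_one hγ hm₀) (ne_zero_of_pow_eq_one hs hm₀) hinv
  have hneg : (-1 : ℂ) ^ m = 1 := by
    rcases mul_eq_zero.1 hprod with h | hγα
    · rcases mul_eq_zero.1 h with hαβ | hβγ
      · exact neg_one_pow_eq_one_of_add_eq_zero hα hβ hαβ
      · exact neg_one_pow_eq_one_of_add_eq_zero hβ hγ hβγ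
    · exact neg_one_pow_eq_one_of_add_eq_zero hγ hα hγα
  exact (neg_one_pow_eq_one_iff_even (by norm_num)).1 hneg
end
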